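/- (Generalised Vaughan identity.) Let r ≥ 1 be an integer, let X ≥ 1 be real, and set M(s) = Σ_{n≤X} μ(n) n^{−s}. Then for every complex s with Re(s) > 1 one has ζ'(s)/ζ(s) = Σ_{j=1}^{r} (−1)^{j−1} C(r,j) ζ(s)^{j−1} ζ'(s) M(s)^{j} + (1 − ζ(s)M(s))^{r} · ζ'(s)/ζ(s), where C(r,j) denotes the binomial coefficient. -/

import Mathlib

open scoped BigOperators ArithmeticFunction

/-- The Dirichlet polynomial `M(s) = Σ_{n ≤ X} μ(n) n^{-s}`. -/
noncomputable def moebiusPoly (X : ℝ) (s : ℂ) : ℂ :=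
  ∑ n ∈ Finset.Icc 1 ⌊X⌋₊, (ArithmeticFunction.moebius n : ℂ) * (n : ℂ) ^ (-s)

/-!
The identity is pure algebra in the field `ℂ` once `ζ(s) ≠ 0`: by the binomial theorem
`1 - (1 - a m)^r = Σ_{j=1}^{r} (-1)^{j-1} C(r,j) (a m)^j`, and multiplying by `b / a` turns the
`j`-th term into `(-1)^{j-1} C(r,j) a^{j-1} b m^j`.
-/

theorem sum_Icc_neg_one_pow_mul_choose_mul_pow {R : Type*} [CommRing R] (r : ℕ) (x : R) :
    ∑ j ∈ Finset.Icc 1 r, (-1 : R) ^ (j - 1) * (r.choose j : R) * x ^ j = 1 - (1 - x) ^ r := by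
  have binomial : (1 - x) ^ r = 1 + ∑ j ∈ Finset.Icc 1 r, (-x) ^ j * (r.choose j : R) := by
    rw [sub_eq_neg_add, add_pow, Finset.range_eq_Ico,
      Finset.sum_eq_sum_Ico_succ_bot r.succ_pos, Nat.succ_eq_add_one,
      Finset.Ico_add_one_right_eq_Icc]
    simp
  rw [binomial, sub_add_cancel_left, ← Finset.sum_neg_distrib]
  refine Finset.sum_congr rfl fun j hj => ?_
  obtain ⟨k, rfl⟩ := Nat.exists_eq_add_of_le' (Finset.mem_Icc.mp hj).1
  rw [Nat.add_sub_cancel, neg_pow, pow_succ]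
  ring

theorem div_eq_sum_choose_add_one_sub_mul_pow_mul_div {K : Type*} [Field K] (r : ℕ)
    {a : K} (ha : a ≠ 0) (b m : K) :
    b / a = (∑ j ∈ Finset.Icc 1 r, (-1 : K) ^ (j - 1) * (r.choose j : K) *
        a ^ (j - 1) * b * m ^ j) + (1 - a * m) ^ r * (b / a) := by
  have term (j : ℕ) (hj : j ∈ Finset.Icc 1 r) :
      (-1 : K) ^ (j - 1) * (r.choose j : K) * a ^ (j - 1) * b * m ^ j =
        (-1 : K) ^ (j - 1) * (r.choose j : K) * (a * m) ^ j * (b / a) := by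
    obtain ⟨k, rfl⟩ := Nat.exists_eq_add_of_le' (Finset.mem_Icc.mp hj).1
    rw [Nat.add_sub_cancel, pow_succ (a * m)]
    field_simp
    ring
  rw [Finset.sum_congr rfl term, ← Finset.sum_mul, sum_Icc_neg_one_pow_mul_choose_mul_pow]
  ring

theorem generalized_vaughan_identity_general (r : ℕ) (X : ℝ)
    (s : ℂ) (hs : 1 < s.re) :
    deriv riemannZeta s / riemannZeta s =
      (∑ j ∈ Finset.Icc 1 r, (-1 : ℂ) ^ (j - 1) * (r.choose j : ℂ) *
        riemannZeta s ^ (j - 1) * deriv riemannZeta s * (moebiusPoly X s) ^ j) +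
      (1 - riemannZeta s * moebiusPoly X s) ^ r *
        (deriv riemannZeta s / riemannZeta s) :=
  div_eq_sum_choose_add_one_sub_mul_pow_mul_div r (riemannZeta_ne_zero_of_one_lt_re hs) _ _

/-- Heath-Brown's generalised Vaughan identity:
for `Re(s) > 1`,
`ζ'(s)/ζ(s) = Σ_{j=1}^{r} (−1)^{j−1} C(r,j) ζ(s)^{j−1} ζ'(s) M(s)^{j}
  + (1 − ζ(s)M(s))^{r} ζ'(s)/ζ(s)`. -/
theorem generalized_vaughan_identity (r : ℕ) (hr : 1 ≤ r) (X : ℝ) (hX : 1 ≤ X)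
    (s : ℂ) (hs : 1 < s.re) :
    deriv riemannZeta s / riemannZeta s =
      (∑ j ∈ Finset.Icc 1 r, (-1 : ℂ) ^ (j - 1) * (r.choose j : ℂ) *
        riemannZeta s ^ (j - 1) * deriv riemannZeta s * (moebiusPoly X s) ^ j) +
      (1 - riemannZeta s * moebiusPoly X s) ^ r *
        (deriv riemannZeta s / riemannZeta s) :=
  generalized_vaughan_identity_general r X s hs
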